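/- arXiv:2509.16318 — 3 statements merged into one kernel-verified Lean document; each statement's English description precedes it below -/
import Mathlib

section
/- For a weighted graph G and an edge e of G, the chromatic symmetric function satisfies the deletion-contraction relation X_G = X_{G\e} - X_{G/e}, where G\e is G with e deleted and G/e is G with e contracted (the new vertex receiving the sum of the weights of the two endpoints of e). -/
/-!
Sort the proper colorings of `G ∖ e`, `e = uv`, by whether `u` and `v` receive the same color.
Those with different colors are exactly the proper colorings of `G`. Those with equal colors
factor uniquely through the vertex map `V → V ∖ {v}` sending `v` to `u`, and are then exactly
the proper colorings of `G / e`; since that map pushes `w` forward to the contracted weight, the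
color-weight distribution is preserved. Hence `[x^d] X_{G∖e} = [x^d] X_G + [x^d] X_{G/e}`.
-/

open scoped Classical

noncomputable section

/-- Coefficient of the monomial with exponent vector `d` in the chromatic symmetric
function of the weighted graph `(G, w)`: the number of proper colorings `κ : V → ℕ`
whose color-weight distribution is `d`. -/
def csfCoeff {V : Type*} [Fintype V] (G : SimpleGraph V) (w : V → ℕ) (d : ℕ →₀ ℕ) : ℕ :=
  Nat.card {κ : V → ℕ // (∀ u v, G.Adj u v → κ u ≠ κ v) ∧
    ∀ i : ℕ, d i = ∑ v ∈ Finset.univ.filter (fun v => κ v = i), w v}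

/-- The chromatic symmetric function of a weighted graph, as a formal power series in
countably many variables `x_0, x_1, x_2, …`. -/
def csf {V : Type*} [Fintype V] (G : SimpleGraph V) (w : V → ℕ) : MvPowerSeries ℕ ℚ :=
  fun d => (csfCoeff G w d : ℚ)

/-- Contraction of the pair `{u, v}` in `G`: vertex `v` is deleted and `u` becomes the
merged vertex, adjacent to all former neighbors of `u` or of `v`. -/
def SimpleGraph.contractEdge {V : Type*} (G : SimpleGraph V) (u v : V) :
    SimpleGraph {x : V // x ≠ v} where
  Adj a b := a ≠ b ∧ (G.Adj a b ∨ (a.1 = u ∧ G.Adj v b) ∨ (b.1 = u ∧ G.Adj a v))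
  symm := by
    constructor
    rintro a b ⟨hab, h | ⟨h1, h2⟩ | ⟨h1, h2⟩⟩
    · exact ⟨hab.symm, Or.inl h.symm⟩
    · exact ⟨hab.symm, Or.inr (Or.inr ⟨h1, h2.symm⟩)⟩
    · exact ⟨hab.symm, Or.inr (Or.inl ⟨h1, h2.symm⟩)⟩
  loopless := by constructor; rintro a ⟨h, -⟩; exact h rfl

/-- The weight function after contracting the edge `{u, v}`: the merged vertex `u`
receives the sum of the weights of the two endpoints. -/
def contractWeight {V : Type*} [DecidableEq V] (w : V → ℕ) (u v : V) :
    {x : V // x ≠ v} → ℕ :=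
  fun x => if x.1 = u then w u + w v else w x.1

open Finset

section Coloring

variable {α β : Type*}

def IsProperColoring (G : SimpleGraph α) (κ : α → ℕ) : Prop :=
  ∀ a b, G.Adj a b → κ a ≠ κ b

variable [Fintype α] [Fintype β]

def colorWeight (w : α → ℕ) (κ : α → ℕ) (i : ℕ) : ℕ :=
  ∑ a ∈ univ.filter (fun a => κ a = i), w a

lemma csfCoeff_eq_card (G : SimpleGraph α) (w : α → ℕ) (d : ℕ →₀ ℕ) :
    csfCoeff G w d = Nat.card {κ // IsProperColoring G κ ∧ ⇑d = colorWeight w κ} := by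
  simp only [csfCoeff, IsProperColoring, funext_iff, colorWeight]

lemma colorWeight_comp [DecidableEq β] (w : α → ℕ) (f : α → β) (κ : β → ℕ) :
    colorWeight w (κ ∘ f) =
      colorWeight (fun b => ∑ a ∈ univ.filter (fun a => f a = b), w a) κ := by
  ext i
  rw [colorWeight, colorWeight, sum_fiberwise_eq_sum_filter]
  simp

lemma mem_support_of_eq_colorWeight {w : α → ℕ} (hw : ∀ a, 0 < w a) {d : ℕ →₀ ℕ} {κ : α → ℕ}
    (hκ : ⇑d = colorWeight w κ) (a : α) : κ a ∈ d.support := by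
  have : w a ≤ d (κ a) := hκ ▸ single_le_sum (fun _ _ => Nat.zero_le _) (by simp)
  exact Finsupp.mem_support_iff.2 (by have := hw a; omega)

lemma finite_setOf_eq_colorWeight {w : α → ℕ} (hw : ∀ a, 0 < w a) (d : ℕ →₀ ℕ) :
    {κ : α → ℕ | ⇑d = colorWeight w κ}.Finite :=
  (Set.Finite.pi fun _ => d.support.finite_toSet).subset
    fun _ hκ a _ => mem_support_of_eq_colorWeight hw hκ a

end Coloring

namespace SimpleGraph

variable {V : Type*} [DecidableEq V] {u v : V}

def contractProj (hne : u ≠ v) (y : V) : {x : V // x ≠ v} :=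
  if h : y = v then ⟨u, hne⟩ else ⟨y, h⟩

lemma contractProj_of_ne (hne : u ≠ v) {y : V} (hy : y ≠ v) : contractProj hne y = ⟨y, hy⟩ :=
  dif_neg hy

@[simp]
lemma contractProj_self (hne : u ≠ v) : contractProj hne v = ⟨u, hne⟩ := dif_pos rfl

@[simp]
lemma contractProj_left (hne : u ≠ v) : contractProj hne u = ⟨u, hne⟩ := dif_neg hne

@[simp]
lemma contractProj_val (hne : u ≠ v) (x : {x : V // x ≠ v}) : contractProj hne x.1 = x :=
  contractProj_of_ne hne x.2

lemma contractProj_surjective (hne : u ≠ v) : Function.Surjective (contractProj hne) :=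
  fun x => ⟨x.1, contractProj_val hne x⟩

lemma comp_val_comp_contractProj (hne : u ≠ v) {κ : V → ℕ} (h : κ u = κ v) :
    (κ ∘ Subtype.val) ∘ contractProj hne = κ := by
  funext y
  by_cases hy : y = v
  · subst hy; simp [h]
  · simp [contractProj_of_ne hne hy]

lemma sum_fiber_contractProj [Fintype V] (hne : u ≠ v) (w : V → ℕ) (x : {x : V // x ≠ v}) :
    ∑ y ∈ univ.filter (fun y => contractProj hne y = x), w y = contractWeight w u v x := by
  have hfib : univ.filter (fun y => contractProj hne y = x) =
      if x.1 = u then {u, v} else {x.1} := by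
    ext y
    by_cases hy : y = v
    · subst hy; split_ifs with hx <;> simp [Subtype.ext_iff, hx, eq_comm, x.2.symm]
    · split_ifs with hx <;> simp [contractProj_of_ne hne hy, Subtype.ext_iff, hx, hy]
  rw [hfib, contractWeight]
  split_ifs <;> simp [hne]

lemma colorWeight_comp_contractProj [Fintype V] (hne : u ≠ v) (w : V → ℕ)
    (κ : {x : V // x ≠ v} → ℕ) :
    colorWeight w (κ ∘ contractProj hne) = colorWeight (contractWeight w u v) κ := by
  rw [colorWeight_comp]
  simp only [sum_fiber_contractProj]

variable (G : SimpleGraph V)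

lemma contractEdge_adj_contractProj (hne : u ≠ v) {a b : V}
    (h : (G.deleteEdges {s(u, v)}).Adj a b) :
    (G.contractEdge u v).Adj (contractProj hne a) (contractProj hne b) := by
  obtain ⟨hab, hab_ne⟩ := G.deleteEdges_adj.1 h
  simp only [Set.mem_singleton_iff] at hab_ne
  by_cases ha : a = v
  · subst ha
    have hbu : b ≠ u := by rintro rfl; exact hab_ne Sym2.eq_swap
    rw [contractProj_self, contractProj_of_ne hne hab.ne.symm]
    exact ⟨by simp [Subtype.ext_iff, hbu.symm], Or.inr (Or.inl ⟨rfl, hab⟩)⟩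
  by_cases hb : b = v
  · subst hb
    have hau : a ≠ u := by rintro rfl; exact hab_ne rfl
    rw [contractProj_self, contractProj_of_ne hne ha]
    exact ⟨by simp [Subtype.ext_iff, hau], Or.inr (Or.inr ⟨rfl, hab⟩)⟩
  rw [contractProj_of_ne hne ha, contractProj_of_ne hne hb]
  exact ⟨by simp [Subtype.ext_iff, hab.ne], Or.inl hab⟩

lemma exists_deleteEdges_adj_of_contractEdge_adj (hne : u ≠ v) {a b : {x : V // x ≠ v}}
    (h : (G.contractEdge u v).Adj a b) :
    ∃ a' b', contractProj hne a' = a ∧ contractProj hne b' = b ∧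
      (G.deleteEdges {s(u, v)}).Adj a' b' := by
  obtain ⟨hab, h | ⟨hau, hvb⟩ | ⟨hbu, hav⟩⟩ := h
  · exact ⟨a, b, by simp, by simp, G.deleteEdges_adj.2 ⟨h, by simp [a.2, b.2]⟩⟩
  · refine ⟨v, b, by simp [Subtype.ext_iff, hau], by simp, G.deleteEdges_adj.2 ⟨hvb, ?_⟩⟩
    simpa [b.2, hau, hne, Subtype.ext_iff, eq_comm] using hab
  · refine ⟨a, v, by simp, by simp [Subtype.ext_iff, hbu], G.deleteEdges_adj.2 ⟨hav, ?_⟩⟩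
    simpa [a.2, hbu, Subtype.ext_iff] using hab

lemma isProperColoring_contractEdge_iff (hne : u ≠ v) (κ : {x : V // x ≠ v} → ℕ) :
    IsProperColoring (G.contractEdge u v) κ ↔
      IsProperColoring (G.deleteEdges {s(u, v)}) (κ ∘ contractProj hne) := by
  constructor
  · intro hκ a b hab
    exact hκ _ _ (G.contractEdge_adj_contractProj hne hab)
  · intro hκ a b hab
    obtain ⟨a', b', rfl, rfl, hab'⟩ := G.exists_deleteEdges_adj_of_contractEdge_adj hne hab
    exact hκ a' b' hab'

lemma isProperColoring_iff_deleteEdges {κ : V → ℕ} (he : G.Adj u v) :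
    IsProperColoring G κ ↔ IsProperColoring (G.deleteEdges {s(u, v)}) κ ∧ κ u ≠ κ v := by
  refine ⟨fun hκ => ⟨fun a b hab => hκ a b (G.deleteEdges_le _ hab), hκ u v he⟩, ?_⟩
  rintro ⟨hκ, huv⟩ a b hab
  by_cases h : s(a, b) = s(u, v)
  · rcases Sym2.eq_iff.1 h with ⟨rfl, rfl⟩ | ⟨rfl, rfl⟩
    exacts [huv, huv.symm]
  · exact hκ a b (G.deleteEdges_adj.2 ⟨hab, h⟩)

lemma card_coloring_contractEdge [Fintype V] (hne : u ≠ v) (w : V → ℕ) (d : ℕ →₀ ℕ) :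
    Nat.card {κ // IsProperColoring (G.contractEdge u v) κ ∧
        ⇑d = colorWeight (contractWeight w u v) κ} =
      Nat.card {κ // (IsProperColoring (G.deleteEdges {s(u, v)}) κ ∧ ⇑d = colorWeight w κ) ∧
        κ u = κ v} := by
  refine Nat.card_eq_of_bijective (fun κ => ⟨κ.1 ∘ contractProj hne, ?_, by simp⟩) ⟨?_, ?_⟩
  · rw [← isProperColoring_contractEdge_iff, colorWeight_comp_contractProj]
    exact κ.2
  · intro κ₁ κ₂ h
    exact Subtype.ext <| (contractProj_surjective hne).injective_comp_right
      (congrArg Subtype.val h)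
  · rintro ⟨κ, ⟨hproper, hweight⟩, huv⟩
    refine ⟨⟨κ ∘ Subtype.val, ?_⟩, Subtype.ext (comp_val_comp_contractProj hne huv)⟩
    rw [isProperColoring_contractEdge_iff G hne, ← colorWeight_comp_contractProj hne,
      comp_val_comp_contractProj hne huv]
    exact ⟨hproper, hweight⟩

end SimpleGraph

lemma Nat.card_subtype_eq_card_and_add_card_and_not {α : Type*} (p q : α → Prop)
    [Finite {a // p a}] :
    Nat.card {a // p a} = Nat.card {a // p a ∧ q a} + Nat.card {a // p a ∧ ¬ q a} := by
  calc Nat.card {a // p a}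
      = Nat.card ({x : {a // p a} // q x} ⊕ {x : {a // p a} // ¬ q x}) :=
        Nat.card_congr (Equiv.sumCompl _).symm
    _ = _ := by
        rw [Nat.card_sum, Nat.card_congr (Equiv.subtypeSubtypeEquivSubtypeInter p q),
          Nat.card_congr (Equiv.subtypeSubtypeEquivSubtypeInter p (¬ q ·))]

theorem csfCoeff_deleteEdges {V : Type*} [Fintype V] [DecidableEq V] (G : SimpleGraph V)
    {w : V → ℕ} (hw : ∀ x, 0 < w x) {u v : V} (he : G.Adj u v) (d : ℕ →₀ ℕ) :
    csfCoeff (G.deleteEdges {s(u, v)}) w d =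
      csfCoeff G w d + csfCoeff (G.contractEdge u v) (contractWeight w u v) d := by
  -- `Nat.card` of an infinite type is `0`; positive weights keep every coloring set finite.
  have : Finite {κ // IsProperColoring (G.deleteEdges {s(u, v)}) κ ∧ ⇑d = colorWeight w κ} :=
    ((finite_setOf_eq_colorWeight hw d).subset fun _ h => h.2).to_subtype
  rw [csfCoeff_eq_card, csfCoeff_eq_card, csfCoeff_eq_card,
    Nat.card_subtype_eq_card_and_add_card_and_not _ fun κ : V → ℕ => κ u ≠ κ v,
    G.card_coloring_contractEdge he.ne]
  congr 1
  · exact Nat.card_congr <| Equiv.subtypeEquivRight fun κ => by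
      rw [G.isProperColoring_iff_deleteEdges he, and_right_comm]
  · simp only [ne_eq, not_not]

/-- **Deletion–contraction for the chromatic symmetric function of weighted graphs**:
`X_G = X_{G\e} - X_{G/e}`. -/
theorem csf_deletion_contraction {V : Type*} [Fintype V] [DecidableEq V]
    (G : SimpleGraph V) (w : V → ℕ) (hw : ∀ x, 0 < w x) (u v : V) (he : G.Adj u v) :
    csf G w = csf (G.deleteEdges {s(u, v)}) w
      - csf (G.contractEdge u v) (contractWeight w u v) := by
  funext d
  change (csfCoeff G w d : ℚ) = csfCoeff (G.deleteEdges {s(u, v)}) w d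
    - csfCoeff (G.contractEdge u v) (contractWeight w u v) d
  rw [csfCoeff_deleteEdges G hw he d, Nat.cast_add, add_sub_cancel_right]
end
end

section
/- For any unweighted graph G, the number of (not necessarily induced) 3-vertex paths of G satisfies #P_3(G) ≥ 3·#K_3(G), with equality if and only if every connected component of G is a clique. In particular, for G connected, equality holds iff G is a clique. -/
noncomputable section

/-- The number of (not necessarily induced) 3-vertex paths of `G`: pairs consisting of
a 3-element vertex set together with a choice of middle vertex adjacent to the other
two. -/
def p3Count {V : Type*} [Fintype V] (G : SimpleGraph V) : ℕ :=
  Nat.card {x : Finset V × V // x.1.card = 3 ∧ x.2 ∈ x.1 ∧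
    ∀ y ∈ x.1, y ≠ x.2 → G.Adj x.2 y}

/-- The number of triangles (3-cliques) of `G`. -/
def k3Count {V : Type*} [Fintype V] (G : SimpleGraph V) : ℕ :=
  Nat.card {s : Finset V // G.IsNClique 3 s}

/-!
A triangle together with a choice of one of its vertices is a 3-vertex path centred at that
vertex, so `3 * #K₃ ≤ #P₃`, with equality iff every 3-vertex path closes to a triangle, i.e. iff
any two distinct neighbours of a vertex are adjacent. Under that closure property the relation
"equal or adjacent" is transitive, so it coincides with reachability: every component is a clique.
-/

open Finset

namespace SimpleGraph

variable {V : Type*} (G : SimpleGraph V)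

theorem Reachable.eq_or_adj {G : SimpleGraph V}
    (hG : ∀ ⦃a b c⦄, G.Adj a b → G.Adj b c → a ≠ c → G.Adj a c)
    {u v : V} (h : G.Reachable u v) : u = v ∨ G.Adj u v := by
  rw [reachable_iff_reflTransGen] at h
  induction h with
  | refl => exact .inl rfl
  | @tail b c _ hbc ih =>
    rcases ih with rfl | hub
    · exact .inr hbc
    · by_cases huc : u = c
      · exact .inl huc
      · exact .inr (hG hub hbc huc)

theorem adj_of_adj_of_adj_iff_adj_of_reachable :
    (∀ ⦃a b c⦄, G.Adj a b → G.Adj b c → a ≠ c → G.Adj a c) ↔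
      ∀ u v, u ≠ v → G.Reachable u v → G.Adj u v :=
  ⟨fun hG _ _ hne h => (h.eq_or_adj hG).resolve_left hne,
    fun hG a _ c hab hbc hac => hG a c hac (hab.reachable.trans hbc.reachable)⟩

variable [Fintype V] [DecidableEq V] [DecidableRel G.Adj]

def threePathFinset : Finset (Finset V × V) :=
  {x | #x.1 = 3 ∧ x.2 ∈ x.1 ∧ ∀ y ∈ x.1, y ≠ x.2 → G.Adj x.2 y}

def rootedTriangleFinset : Finset (Finset V × V) :=
  (G.cliqueFinset 3).biUnion fun s => {s} ×ˢ s

theorem mem_rootedTriangleFinset {x : Finset V × V} :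
    x ∈ G.rootedTriangleFinset ↔ G.IsNClique 3 x.1 ∧ x.2 ∈ x.1 := by
  obtain ⟨s, b⟩ := x
  simp [rootedTriangleFinset]

theorem card_rootedTriangleFinset : #G.rootedTriangleFinset = 3 * #(G.cliqueFinset 3) := by
  rw [rootedTriangleFinset, card_biUnion, sum_congr rfl, sum_const, smul_eq_mul, mul_comm]
  · intro s hs
    rw [card_product, card_singleton, one_mul, (mem_cliqueFinset_iff.mp hs).card_eq]
  · intro s _ t _ hst
    exact disjoint_product.mpr (.inl (disjoint_singleton.mpr hst))

theorem rootedTriangleFinset_subset_threePathFinset :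
    G.rootedTriangleFinset ⊆ G.threePathFinset := by
  rintro ⟨s, b⟩ hx
  rw [mem_rootedTriangleFinset] at hx
  obtain ⟨hs, hb⟩ := hx
  simp only [threePathFinset, mem_filter, mem_univ, true_and]
  exact ⟨hs.card_eq, hb, fun y hy hyb => hs.isClique hb hy hyb.symm⟩

theorem threePathFinset_subset_rootedTriangleFinset_iff :
    G.threePathFinset ⊆ G.rootedTriangleFinset ↔
      ∀ ⦃a b c⦄, G.Adj a b → G.Adj b c → a ≠ c → G.Adj a c := by
  constructor
  · intro h a b c hab hbc hac
    have hpath : ({a, b, c}, b) ∈ G.threePathFinset := by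
      simp only [threePathFinset, mem_filter, mem_univ, true_and]
      refine ⟨card_eq_three.mpr ⟨a, b, c, hab.ne, hac, hbc.ne, rfl⟩, by simp, ?_⟩
      simp only [mem_insert, mem_singleton]
      rintro y (rfl | rfl | rfl) hyb
      exacts [hab.symm, absurd rfl hyb, hbc]
    exact ((G.mem_rootedTriangleFinset.mp (h hpath)).1.isClique (by simp) (by simp) hac)
  · rintro hG ⟨s, b⟩ hx
    simp only [threePathFinset, mem_filter, mem_univ, true_and] at hx
    obtain ⟨hcard, hb, hadj⟩ := hx
    refine G.mem_rootedTriangleFinset.mpr ⟨⟨fun y hy z hz hyz => ?_, hcard⟩, hb⟩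
    by_cases hyb : y = b
    · subst hyb
      exact hadj z hz (Ne.symm hyz)
    by_cases hzb : z = b
    · subst hzb
      exact (hadj y hy hyb).symm
    exact hG (hadj y hy hyb).symm (hadj z hz hzb) hyz

end SimpleGraph

open SimpleGraph

section

variable {V : Type*} [Fintype V] (G : SimpleGraph V) [DecidableEq V] [DecidableRel G.Adj]

theorem p3Count_eq_card_threePathFinset : p3Count G = #G.threePathFinset := by
  rw [p3Count, Nat.card_eq_fintype_card, threePathFinset, Fintype.card_subtype]

theorem k3Count_eq_card_cliqueFinset : k3Count G = #(G.cliqueFinset 3) := by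
  rw [k3Count, Nat.card_eq_fintype_card, cliqueFinset, Fintype.card_subtype]

end

theorem three_mul_k3Count_le_p3Count {V : Type*} [Fintype V] (G : SimpleGraph V) :
    3 * k3Count G ≤ p3Count G := by
  classical
  rw [p3Count_eq_card_threePathFinset, k3Count_eq_card_cliqueFinset,
    ← card_rootedTriangleFinset]
  exact card_le_card G.rootedTriangleFinset_subset_threePathFinset

theorem p3Count_eq_three_mul_k3Count_iff {V : Type*} [Fintype V] (G : SimpleGraph V) :
    p3Count G = 3 * k3Count G ↔ ∀ u v, u ≠ v → G.Reachable u v → G.Adj u v := by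
  classical
  rw [← adj_of_adj_of_adj_iff_adj_of_reachable, ← threePathFinset_subset_rootedTriangleFinset_iff,
    p3Count_eq_card_threePathFinset, k3Count_eq_card_cliqueFinset, ← card_rootedTriangleFinset]
  have hsub := G.rootedTriangleFinset_subset_threePathFinset
  exact ⟨fun h => (eq_of_subset_of_card_le hsub h.le).ge, fun h => congrArg card (h.antisymm hsub)⟩

/-- `#P₃(G) ≥ 3·#K₃(G)`, with equality iff every connected component of `G` is a
clique; in particular, for connected `G`, equality holds iff `G` is a clique. -/
theorem p3_ge_three_k3 {V : Type*} [Fintype V] (G : SimpleGraph V) :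
    3 * k3Count G ≤ p3Count G ∧
    (p3Count G = 3 * k3Count G ↔ ∀ u v : V, u ≠ v → G.Reachable u v → G.Adj u v) ∧
    (G.Connected → (p3Count G = 3 * k3Count G ↔ ∀ u v : V, u ≠ v → G.Adj u v)) := by
  refine ⟨three_mul_k3Count_le_p3Count G, p3Count_eq_three_mul_k3Count_iff G, fun hG => ?_⟩
  rw [p3Count_eq_three_mul_k3Count_iff]
  exact forall₂_congr fun u v => ⟨fun h huv => h huv (hG.preconnected u v), fun h huv _ => h huv⟩
end
end

section
/- There is no tuple (a_1, a_2, a_3, a_4, a_5) of complex numbers satisfying simultaneously: a_1^5 = 1, −5·a_1^3·a_2 = 5, 3·a_1·a_2^2 = 3, 6·a_1^2·a_3 = 1, −2·a_2·a_3 = 0, −5·a_1·a_4 = 0, and 2·a_5 = 0. -/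
/-- There is no tuple `(a₁, …, a₅)` of complex numbers with `a₁⁵ = 1`,
`−5a₁³a₂ = 5`, `3a₁a₂² = 3`, `6a₁²a₃ = 1`, `−2a₂a₃ = 0`, `−5a₁a₄ = 0`, `2a₅ = 0`. -/
theorem no_solution_bull_system :
    ¬ ∃ a1 a2 a3 a4 a5 : ℂ,
      a1 ^ 5 = 1 ∧ -5 * a1 ^ 3 * a2 = 5 ∧ 3 * a1 * a2 ^ 2 = 3 ∧
      6 * a1 ^ 2 * a3 = 1 ∧ -2 * a2 * a3 = 0 ∧ -5 * a1 * a4 = 0 ∧ 2 * a5 = 0 := by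
  rintro ⟨a1, a2, a3, a4, a5, h1, h2, h3, h4, h5, -, -⟩
  have ha2 : a2 ≠ 0 := by
    rintro rfl
    simp at h2
  have ha3 : a3 = 0 := by
    rcases mul_eq_zero.1 (by linear_combination -h5/2 : a2 * a3 = 0) with h | h
    · exact absurd h ha2
    · exact h
  rw [ha3] at h4
  simp at h4
end
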